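/- The theta graph with poles a and a' and 3 legs of length 3 each is not layered, i.e., it is not isomorphic to any subgraph of an edge layer of a hypercube. -/

import Mathlib

open SimpleGraph

/-- The hypercube graph `Q_n`. -/
def hypercube (n : ℕ) : SimpleGraph (Finset (Fin n)) where
  Adj A B := (A ⊆ B ∧ B.card = A.card + 1) ∨ (B ⊆ A ∧ A.card = B.card + 1)
  symm := ⟨fun A B h => h.symm⟩
  loopless := ⟨by
    intro A h
    rcases h with ⟨-, h⟩ | ⟨-, h⟩ <;> omega⟩

/-- A graph is layered if it is isomorphic to a subgraph of an edge layer of a hypercube. -/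
def IsLayered {V : Type*} (G : SimpleGraph V) : Prop :=
  ∃ (n k : ℕ) (f : V → Finset (Fin n)), Function.Injective f ∧
    (∀ v, (f v).card = k ∨ (f v).card + 1 = k) ∧
    ∀ u v, G.Adj u v → (hypercube n).Adj (f u) (f v)

/-- The theta graph with two poles (\`Sum.inl 0\` and \`Sum.inl 1\`) and \`k\` legs, each a
path of length \`m ≥ 2\` with \`m - 1\` internal vertices: leg \`i\` is
\`pole 0, (i,0), (i,1), …, (i,m-2), pole 1\`. -/
def thetaGraph (k m : ℕ) : SimpleGraph (Fin 2 ⊕ (Fin k × Fin (m - 1))) :=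
  SimpleGraph.fromRel (fun x y =>
    match x, y with
    | Sum.inl p, Sum.inr (_, l) => (p = 0 ∧ l.val = 0) ∨ (p = 1 ∧ l.val = m - 2)
    | Sum.inr (i, l), Sum.inr (i', l') => i = i' ∧ l.val + 1 = l'.val
    | _, _ => False)

/-!
Layers alternate along each leg, so the two poles `a`, `a'` lie in different layers; read the
legs `a - xᵢ - yᵢ - a'` from the pole `a` in the lower one. Then `xᵢ = a ∪ {pᵢ}` with distinct
`pᵢ`, and `yᵢ ≠ a` forces `pᵢ ∈ yᵢ ⊆ a'`, so `|a' \ a| ≥ 3`, while `a \ a' ⊆ x₀ \ y₀` has at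
most one element. Hence `|a'| ≥ |a| + 2`, although `a'` is only one layer above `a`.
-/

open Finset Function

namespace Finset

variable {α : Type*} [DecidableEq α]

theorem mem_of_subset_insert_of_card_eq {p : α} {a y : Finset α} (hy : y ⊆ insert p a)
    (hcard : #y = #a) (hya : y ≠ a) : p ∈ y := by
  by_contra hp
  exact hya (eq_of_subset_of_card_le ((subset_insert_iff_of_notMem hp).1 hy) hcard.ge)

theorem card_le_two_of_up_down_up {ι : Type*} [Fintype ι] {a a' : Finset α}
    {x y : ι → Finset α} (hax : ∀ i, a ⊆ x i ∧ #(x i) = #a + 1)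
    (hyx : ∀ i, y i ⊆ x i ∧ #(x i) = #(y i) + 1) (hya' : ∀ i, y i ⊆ a' ∧ #a' = #(y i) + 1)
    (hx_inj : Injective x) (hya : ∀ i, y i ≠ a) : Fintype.card ι ≤ 2 := by
  obtain _ | ⟨⟨i₀⟩⟩ := isEmpty_or_nonempty ι
  · simp
  choose p hpa hxp using fun i => exists_eq_insert_iff.2 ⟨(hax i).1, (hax i).2.symm⟩
  have hp_inj : Injective p := fun i j h => hx_inj (by rw [← hxp i, ← hxp j, h])
  have hpy (i : ι) : p i ∈ y i :=
    mem_of_subset_insert_of_card_eq ((hxp i).symm ▸ (hyx i).1) (by grind) (hya i)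
  have h_new : Fintype.card ι ≤ #(a' \ a) := by
    rw [← card_univ]
    exact card_le_card_of_injOn p (fun i _ => mem_sdiff.2 ⟨(hya' i).1 (hpy i), hpa i⟩)
      hp_inj.injOn
  have h_lost : #(a \ a') ≤ 1 :=
    calc #(a \ a') ≤ #(x i₀ \ y i₀) :=
          card_le_card (sdiff_subset_sdiff (hax i₀).1 (hya' i₀).1)
      _ = 1 := by rw [card_sdiff_of_subset (hyx i₀).1]; grind
  grind [card_sdiff_add_card_inter, (hax i₀).2, (hyx i₀).2, (hya' i₀).2]

end Finset

theorem hypercube_adj_card {n : ℕ} {A B : Finset (Fin n)} (h : (hypercube n).Adj A B) :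
    #B = #A + 1 ∨ #A = #B + 1 :=
  h.imp And.right And.right

theorem subset_of_hypercube_adj_of_card_le {n : ℕ} {A B : Finset (Fin n)}
    (h : (hypercube n).Adj A B) (hAB : #A ≤ #B) : A ⊆ B ∧ #B = #A + 1 := by
  rcases h with h | ⟨-, h⟩
  · exact h
  · omega

theorem card_le_two_of_isLayered_paths {V ι : Type*} [Fintype ι] {G : SimpleGraph V}
    {n k : ℕ} {f : V → Finset (Fin n)} (hf_inj : Injective f)
    (hf_card : ∀ v, #(f v) = k ∨ #(f v) + 1 = k)
    (hf_adj : ∀ u v, G.Adj u v → (hypercube n).Adj (f u) (f v))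
    {u u' : V} {v w : ι → V} (hu : #(f u) + 1 = k) (huv : ∀ i, G.Adj u (v i))
    (hvw : ∀ i, G.Adj (v i) (w i)) (hwu' : ∀ i, G.Adj (w i) u') (hv : Injective v)
    (hwu : ∀ i, w i ≠ u) : Fintype.card ι ≤ 2 := by
  have hx (i : ι) : f u ⊆ f (v i) ∧ #(f (v i)) = #(f u) + 1 :=
    subset_of_hypercube_adj_of_card_le (hf_adj _ _ (huv i)) (by grind)
  have hy (i : ι) : f (w i) ⊆ f (v i) ∧ #(f (v i)) = #(f (w i)) + 1 :=
    subset_of_hypercube_adj_of_card_le (hf_adj _ _ (hvw i)).symm (by grind)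
  have ha' (i : ι) : f (w i) ⊆ f u' ∧ #(f u') = #(f (w i)) + 1 :=
    subset_of_hypercube_adj_of_card_le (hf_adj _ _ (hwu' i)) (by grind)
  exact card_le_two_of_up_down_up (x := f ∘ v) (y := f ∘ w) hx hy ha' (hf_inj.comp hv)
    fun i h => hwu i (hf_inj h)

namespace thetaGraph

variable {m : ℕ} (i : Fin m)

theorem adj_inl_zero : (thetaGraph m 3).Adj (.inl 0) (.inr (i, 0)) := by
  simp [thetaGraph]

theorem adj_inr : (thetaGraph m 3).Adj (.inr (i, 0)) (.inr (i, 1)) := by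
  simp [thetaGraph]

theorem adj_inl_one : (thetaGraph m 3).Adj (.inr (i, 1)) (.inl 1) := by
  simp [thetaGraph]

end thetaGraph

theorem le_two_of_isLayered_thetaGraph {m : ℕ} (h : IsLayered (thetaGraph m 3)) : m ≤ 2 := by
  obtain ⟨n, k, f, hf_inj, hf_card, hf_adj⟩ := h
  have hleg (l : Fin 2) : Injective fun i : Fin m => (.inr (i, l) : Fin 2 ⊕ _) :=
    fun i j h => by simpa using h
  rcases hf_card (.inl 0) with h0 | h0
  · obtain rfl | hm := m.eq_zero_or_pos
    · omega
    let i : Fin m := ⟨0, hm⟩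
    have h1 : #(f (.inl 1)) + 1 = k := by
      have := hypercube_adj_card (hf_adj _ _ (thetaGraph.adj_inl_zero i))
      have := hypercube_adj_card (hf_adj _ _ (thetaGraph.adj_inr i))
      have := hypercube_adj_card (hf_adj _ _ (thetaGraph.adj_inl_one i))
      grind
    simpa using card_le_two_of_isLayered_paths hf_inj hf_card hf_adj h1
      (fun i => (thetaGraph.adj_inl_one i).symm) (fun i => (thetaGraph.adj_inr i).symm)
      (fun i => (thetaGraph.adj_inl_zero i).symm) (hleg 1) (by simp)
  · simpa using card_le_two_of_isLayered_paths hf_inj hf_card hf_adj h0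
      thetaGraph.adj_inl_zero thetaGraph.adj_inr thetaGraph.adj_inl_one (hleg 0) (by simp)

/-- The theta graph with 3 legs of length 3 each is not layered. -/
theorem theta_3_3_not_layered : ¬ IsLayered (thetaGraph 3 3) := fun h =>
  absurd (le_two_of_isLayered_thetaGraph h) (by norm_num)
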